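/- An optimal solution to the cardinality-constrained Bernoulli naive Bayes problem (maximizing the Bernoulli log-likelihood subject to ‖θ⁺ − θ⁻‖₀ ≤ k) is given by: choose an index set I consisting of k indices with the largest values of wᵢ − vᵢ, set θ±ᵢ = f±ᵢ/n± for i ∈ I, and θ⁺ᵢ = θ⁻ᵢ = (f⁺ᵢ+f⁻ᵢ)/n for i ∉ I. This solution achieves the optimal value and satisfies the cardinality constraint. -/

import Mathlib

/-! By Gibbs' inequality the frequency `f / n` maximizes the Bernoulli log-likelihood
`f log t + (n - f) log (1 - t)`. Hence a feature with free parameters contributes at most `wᵢ`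
and a feature with tied parameters at most `vᵢ` (the pooled counts), so `vᵢ ≤ wᵢ`. A feasible
point frees at most `k` features, so its likelihood is at most `∑ vᵢ` plus the sum of `wᵢ - vᵢ`
over at most `k` features, i.e. at most `∑ vᵢ + s_k(w - v)`; the candidate frees the `k`
features with the largest gaps and attains this bound. -/

open Finset Real Set
open scoped Classical

/-- Sum of the `k` largest entries of `z ∈ ℝ^m`. -/
noncomputable def topkSum {m : ℕ} (k : ℕ) (hk : k ≤ m) (z : Fin m → ℝ) : ℝ :=
  ((Finset.univ : Finset (Fin m)).powersetCard k).sup'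
    (Finset.powersetCard_nonempty.mpr (by simpa using hk)) (fun I => ∑ i ∈ I, z i)

theorem Finset.sum_le_sum_of_card_eq_of_forall_le {ι M : Type*} [DecidableEq ι]
    [AddCommMonoid M] [PartialOrder M] [IsOrderedAddMonoid M] {z : ι → M} {I J : Finset ι}
    (hcard : #J = #I) (hdom : ∀ i ∈ I, ∀ j ∉ I, z j ≤ z i) :
    ∑ j ∈ J, z j ≤ ∑ i ∈ I, z i := by
  rw [← sum_inter_add_sum_sdiff J I, ← sum_inter_add_sum_sdiff I J, inter_comm]
  refine add_le_add_right ?_ _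
  have e := equivOfCardEq (card_sdiff_comm hcard)
  rw [← sum_coe_sort (J \ I), ← sum_coe_sort (I \ J), ← e.sum_comp]
  exact sum_le_sum fun x _ => hdom _ (mem_sdiff.1 (e x).2).1 _ (mem_sdiff.1 x.2).2

theorem Finset.sum_ite_mem_eq_sum_add_sum_sub {ι G : Type*} [Fintype ι] [DecidableEq ι]
    [AddCommGroup G] (J : Finset ι) (v w : ι → G) :
    ∑ i, (if i ∈ J then w i else v i) = ∑ i, v i + ∑ i ∈ J, (w i - v i) := by
  rw [← sum_add_sum_compl J v, sum_ite, sum_sub_distrib, filter_mem_eq_inter, univ_inter,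
    filter_notMem_eq_sdiff, ← compl_eq_univ_sdiff]
  abel

section TopK

variable {m k : ℕ} (hk : k ≤ m) {z : Fin m → ℝ}

theorem sum_le_topkSum {J : Finset (Fin m)} (hJ : #J = k) : ∑ i ∈ J, z i ≤ topkSum k hk z :=
  le_sup' (fun J => ∑ i ∈ J, z i) (mem_powersetCard.2 ⟨subset_univ J, hJ⟩)

theorem sum_le_topkSum_of_card_le (hz : ∀ i, 0 ≤ z i) {J : Finset (Fin m)} (hJ : #J ≤ k) :
    ∑ i ∈ J, z i ≤ topkSum k hk z := by
  obtain ⟨J', hJJ', hJ'⟩ := exists_superset_card_eq hJ (by simpa using hk)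
  exact (sum_le_sum_of_subset_of_nonneg hJJ' fun i _ _ => hz i).trans (sum_le_topkSum hk hJ')

theorem topkSum_eq_sum_of_forall_le {I : Finset (Fin m)} (hI : #I = k)
    (hdom : ∀ i ∈ I, ∀ j ∉ I, z j ≤ z i) : topkSum k hk z = ∑ i ∈ I, z i := by
  refine le_antisymm (sup'_le _ _ fun J hJ => ?_) (sum_le_topkSum hk hI)
  exact sum_le_sum_of_card_eq_of_forall_le ((mem_powersetCard.1 hJ).2.trans hI.symm) hdom

theorem sum_le_sum_add_topkSum {F v w : Fin m → ℝ} {J : Finset (Fin m)} (hJ : #J ≤ k)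
    (hvw : ∀ i, v i ≤ w i) (hw : ∀ i, F i ≤ w i) (hv : ∀ i ∉ J, F i ≤ v i) :
    ∑ i, F i ≤ ∑ i, v i + topkSum k hk (fun i => w i - v i) :=
  calc ∑ i, F i ≤ ∑ i, (if i ∈ J then w i else v i) :=
        sum_le_sum fun i _ => by split_ifs with hi; exacts [hw i, hv i hi]
    _ = ∑ i, v i + ∑ i ∈ J, (w i - v i) := sum_ite_mem_eq_sum_add_sum_sub J v w
    _ ≤ ∑ i, v i + topkSum k hk (fun i => w i - v i) :=
        add_le_add_right (sum_le_topkSum_of_card_le hk (fun i => sub_nonneg.2 (hvw i)) hJ) _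

end TopK

theorem Real.mul_log_le_mul_log_add {a x y : ℝ} (ha : 0 ≤ a) (hx : 0 < x) (hy : 0 < y) :
    a * log x ≤ a * log y + a * (x / y - 1) := by
  have h : log x ≤ log y + (x / y - 1) := by
    rw [← sub_le_iff_le_add', ← log_div hx.ne' hy.ne']
    exact log_le_sub_one_of_pos (div_pos hx hy)
  exact (mul_le_mul_of_nonneg_left h ha).trans_eq (mul_add _ _ _)

/-- Log-likelihood of the success probability `t` after `f` successes in `n` trials. -/
noncomputable def bernoulliLogLik (f n t : ℝ) : ℝ := f * log t + (n - f) * log (1 - t)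

theorem bernoulliLogLik_add (f₁ n₁ f₂ n₂ t : ℝ) :
    bernoulliLogLik f₁ n₁ t + bernoulliLogLik f₂ n₂ t = bernoulliLogLik (f₁ + f₂) (n₁ + n₂) t := by
  unfold bernoulliLogLik; ring

theorem div_mem_Ioo_zero_one {f n : ℝ} (hf : 0 < f) (hfn : f < n) : f / n ∈ Ioo (0 : ℝ) 1 :=
  ⟨div_pos hf (hf.trans hfn), (div_lt_one (hf.trans hfn)).2 hfn⟩

theorem bernoulliLogLik_le_of_mem_Ioo {f n t : ℝ} (hf : 0 < f) (hfn : f < n)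
    (ht : t ∈ Ioo (0 : ℝ) 1) :
    bernoulliLogLik f n t ≤ bernoulliLogLik f n (f / n) := by
  have hp := div_mem_Ioo_zero_one hf hfn
  have h₁ := mul_log_le_mul_log_add hf.le ht.1 hp.1
  have h₂ := mul_log_le_mul_log_add (sub_nonneg.2 hfn.le) (sub_pos.2 ht.2) (sub_pos.2 hp.2)
  -- the two error terms are `n t - f` and `n (1 - t) - (n - f)`
  have hcancel : f * (t / (f / n) - 1) + (n - f) * ((1 - t) / (1 - f / n) - 1) = 0 := by
    rw [one_sub_div (hf.trans hfn).ne']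
    field_simp [(sub_pos.2 hfn).ne']
    ring
  unfold bernoulliLogLik
  linarith

theorem sparse_bernoulli_nb_solution_general (m k : ℕ) (hk : k ≤ m) (np nm : ℝ)
    (fp fm : Fin m → ℝ)
    (hfp : ∀ i, 0 < fp i ∧ fp i < np) (hfm : ∀ i, 0 < fm i ∧ fm i < nm)
    (I : Finset (Fin m)) (hI : I.card = k)
    (hItop : ∀ i ∈ I, ∀ j ∉ I, (fp j * Real.log (fp j / np) +
        (np - fp j) * Real.log (1 - fp j / np) +
        (fm j * Real.log (fm j / nm) + (nm - fm j) * Real.log (1 - fm j / nm))) -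
        ((fp j + fm j) * Real.log ((fp j + fm j) / (np + nm)) +
          (np + nm - fp j - fm j) * Real.log (1 - (fp j + fm j) / (np + nm))) ≤
      (fp i * Real.log (fp i / np) +
        (np - fp i) * Real.log (1 - fp i / np) +
        (fm i * Real.log (fm i / nm) + (nm - fm i) * Real.log (1 - fm i / nm))) -
        ((fp i + fm i) * Real.log ((fp i + fm i) / (np + nm)) +
          (np + nm - fp i - fm i) * Real.log (1 - (fp i + fm i) / (np + nm)))) :
    let n := np + nm
    let θp : Fin m → ℝ := fun i => if i ∈ I then fp i / np else (fp i + fm i) / n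
    let θm : Fin m → ℝ := fun i => if i ∈ I then fm i / nm else (fp i + fm i) / n
    let L : (Fin m → ℝ) → (Fin m → ℝ) → ℝ := fun t1 t2 =>
      ∑ i, (fp i * Real.log (t1 i) + (np - fp i) * Real.log (1 - t1 i) +
        (fm i * Real.log (t2 i) + (nm - fm i) * Real.log (1 - t2 i)))
    let v : Fin m → ℝ := fun i =>
      (fp i + fm i) * Real.log ((fp i + fm i) / n) +
        (n - fp i - fm i) * Real.log (1 - (fp i + fm i) / n)
    let w : Fin m → ℝ := fun i =>
      fp i * Real.log (fp i / np) + (np - fp i) * Real.log (1 - fp i / np) +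
        (fm i * Real.log (fm i / nm) + (nm - fm i) * Real.log (1 - fm i / nm))
    (Finset.univ.filter (fun i => θp i ≠ θm i)).card ≤ k ∧
    L θp θm = ∑ i, v i + topkSum k hk (fun i => w i - v i) ∧
    (∀ t1 t2 : Fin m → ℝ, (∀ i, t1 i ∈ Ioo (0 : ℝ) 1) →
      (∀ i, t2 i ∈ Ioo (0 : ℝ) 1) →
      (Finset.univ.filter (fun i => t1 i ≠ t2 i)).card ≤ k →
      L t1 t2 ≤ L θp θm) := by
  intro n θp θm L v w
  have hpooled : ∀ i, 0 < fp i + fm i ∧ fp i + fm i < n := fun i =>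
    ⟨add_pos (hfp i).1 (hfm i).1, add_lt_add (hfp i).2 (hfm i).2⟩
  have hv : ∀ i, bernoulliLogLik (fp i + fm i) n ((fp i + fm i) / n) = v i := fun i => by
    simp only [v, bernoulliLogLik]; ring
  have hfree : ∀ i s t, s ∈ Ioo (0 : ℝ) 1 → t ∈ Ioo (0 : ℝ) 1 →
      bernoulliLogLik (fp i) np s + bernoulliLogLik (fm i) nm t ≤ w i :=
    fun i s t hs ht => add_le_add (bernoulliLogLik_le_of_mem_Ioo (hfp i).1 (hfp i).2 hs)
      (bernoulliLogLik_le_of_mem_Ioo (hfm i).1 (hfm i).2 ht)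
  have htied : ∀ i t, t ∈ Ioo (0 : ℝ) 1 →
      bernoulliLogLik (fp i) np t + bernoulliLogLik (fm i) nm t ≤ v i := fun i t ht => by
    rw [bernoulliLogLik_add, ← hv]
    exact bernoulliLogLik_le_of_mem_Ioo (hpooled i).1 (hpooled i).2 ht
  have hvw : ∀ i, v i ≤ w i := fun i => by
    rw [← hv, ← bernoulliLogLik_add]
    have hc := div_mem_Ioo_zero_one (hpooled i).1 (hpooled i).2
    exact hfree i _ _ hc hc
  have hLθ : L θp θm = ∑ i, v i + topkSum k hk (fun i => w i - v i) := by
    rw [topkSum_eq_sum_of_forall_le hk hI hItop, ← sum_ite_mem_eq_sum_add_sum_sub]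
    refine sum_congr rfl fun i _ => ?_
    by_cases hi : i ∈ I
    · simp only [θp, θm, if_pos hi]
    · simp only [θp, θm, if_neg hi]
      rw [← hv, ← bernoulliLogLik_add]
      rfl
  refine ⟨(card_le_card fun i hi => ?_).trans hI.le, hLθ, fun t1 t2 ht1 ht2 hcard => hLθ ▸ ?_⟩
  · by_contra hiI
    simp [θp, θm, hiI] at hi
  · refine sum_le_sum_add_topkSum hk hcard hvw (fun i => hfree i _ _ (ht1 i) (ht2 i)) fun i hi => ?_
    rw [mem_filter, not_and, not_not] at hi
    exact hi (mem_univ i) ▸ htied i _ (ht1 i)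

/-- An explicit optimizer for sparse Bernoulli naive Bayes: take a set `I` of
`k` indices with the largest values of `w i - v i`, set `θ±ᵢ = f±ᵢ/n±` on `I`
and `θ⁺ᵢ = θ⁻ᵢ = (f⁺ᵢ + f⁻ᵢ)/n` off `I`.  This is feasible for the
cardinality constraint and achieves the optimal value, dominating every
feasible point. -/
theorem sparse_bernoulli_nb_solution (m k : ℕ) (hk : k ≤ m) (np nm : ℝ)
    (fp fm : Fin m → ℝ) (hnp : 0 < np) (hnm : 0 < nm)
    (hfp : ∀ i, 0 < fp i ∧ fp i < np) (hfm : ∀ i, 0 < fm i ∧ fm i < nm)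
    (I : Finset (Fin m)) (hI : I.card = k)
    (hItop : ∀ i ∈ I, ∀ j ∉ I, (fp j * Real.log (fp j / np) +
        (np - fp j) * Real.log (1 - fp j / np) +
        (fm j * Real.log (fm j / nm) + (nm - fm j) * Real.log (1 - fm j / nm))) -
        ((fp j + fm j) * Real.log ((fp j + fm j) / (np + nm)) +
          (np + nm - fp j - fm j) * Real.log (1 - (fp j + fm j) / (np + nm))) ≤
      (fp i * Real.log (fp i / np) +
        (np - fp i) * Real.log (1 - fp i / np) +
        (fm i * Real.log (fm i / nm) + (nm - fm i) * Real.log (1 - fm i / nm))) -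
        ((fp i + fm i) * Real.log ((fp i + fm i) / (np + nm)) +
          (np + nm - fp i - fm i) * Real.log (1 - (fp i + fm i) / (np + nm)))) :
    let n := np + nm
    let θp : Fin m → ℝ := fun i => if i ∈ I then fp i / np else (fp i + fm i) / n
    let θm : Fin m → ℝ := fun i => if i ∈ I then fm i / nm else (fp i + fm i) / n
    let L : (Fin m → ℝ) → (Fin m → ℝ) → ℝ := fun t1 t2 =>
      ∑ i, (fp i * Real.log (t1 i) + (np - fp i) * Real.log (1 - t1 i) +
        (fm i * Real.log (t2 i) + (nm - fm i) * Real.log (1 - t2 i)))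
    let v : Fin m → ℝ := fun i =>
      (fp i + fm i) * Real.log ((fp i + fm i) / n) +
        (n - fp i - fm i) * Real.log (1 - (fp i + fm i) / n)
    let w : Fin m → ℝ := fun i =>
      fp i * Real.log (fp i / np) + (np - fp i) * Real.log (1 - fp i / np) +
        (fm i * Real.log (fm i / nm) + (nm - fm i) * Real.log (1 - fm i / nm))
    (Finset.univ.filter (fun i => θp i ≠ θm i)).card ≤ k ∧
    L θp θm = ∑ i, v i + topkSum k hk (fun i => w i - v i) ∧
    (∀ t1 t2 : Fin m → ℝ, (∀ i, t1 i ∈ Ioo (0 : ℝ) 1) →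
      (∀ i, t2 i ∈ Ioo (0 : ℝ) 1) →
      (Finset.univ.filter (fun i => t1 i ≠ t2 i)).card ≤ k →
      L t1 t2 ≤ L θp θm) :=
  sparse_bernoulli_nb_solution_general m k hk np nm fp fm hfp hfm I hI hItop
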